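/- Let ρ : ℤ_n → ℂ∖{0} be a one-dimensional projective σ_s-representation, i.e., ρ(x)·ρ(y) = σ_s(x,y)·ρ(xy) for all x, y ∈ ℤ_n. Then λ = ρ(g) satisfies λ^n = 𝕢^s. -/

import Mathlib

/-- The 3-cocycle `Φ_s` on the cyclic group `ℤ_n` (written additively via `ZMod n`,
where `g^i` corresponds to `(i : ZMod n)`), defined by
`Φ_s(g^i, g^j, g^k) = 𝕢^{s i (j+k-(j+k)')/n}` for `0 ≤ i,j,k ≤ n-1`,
where `i'` is the remainder of `i` modulo `n`. -/
noncomputable def PhiCocycle (n s : ℕ) (q : ℂ) (x y z : ZMod n) : ℂ :=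
  q ^ (s * x.val * ((y.val + z.val - (y.val + z.val) % n) / n))

/-- The 2-cocycle `σ_s` on `ℤ_n` defined from `Φ_s` by
`σ_s(x,y) = Φ_s(x,y,g)·Φ_s(xy,y⁻¹,x⁻¹)·Φ_s(x,yg,y⁻¹) / (Φ_s(xyg,y⁻¹,x⁻¹)·Φ_s(x,y,y⁻¹))`,
where the generator `g` corresponds to `(1 : ZMod n)`. -/
noncomputable def SigmaCocycle (n s : ℕ) (q : ℂ) (x y : ZMod n) : ℂ :=
  PhiCocycle n s q x y 1 * PhiCocycle n s q (x + y) (-y) (-x) *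
      PhiCocycle n s q x (y + 1) (-y) /
    (PhiCocycle n s q (x + y + 1) (-y) (-x) * PhiCocycle n s q x y (-y))


/-!
In `ZMod n`, iterating `ρ x * ρ 1 = σ(x, 1) * ρ (x + 1)` once around the cycle gives
`ρ(1)^n = ∏ₓ σ(x, 1)`. The exponent of `Φ_s(x, y, z)` is `s x'` times the carry `c(y, z)` of
adding the representatives `y'` and `z'`, and `c` is a 2-cocycle; this collapses `σ(x, 1)` to
`((𝕢^s)^((x+1)') / (𝕢^s)^((x+2)'))^c(-1, -x)`, which is `1` for `x = 0` and `𝕢^{-s}` otherwise.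
Hence `ρ(1)^n = 𝕢^{-s(n-1)} = 𝕢^s`.
-/

open Finset

namespace ZMod

variable {n : ℕ}

def carry (a b : ZMod n) : ℕ := (a.val + b.val) / n

theorem carry_add_carry [NeZero n] (a b c : ZMod n) :
    carry a b + carry (a + b) c = (a.val + b.val + c.val) / n := by
  rw [carry, carry, val_add]
  conv_rhs => rw [← Nat.div_add_mod (a.val + b.val) n, add_assoc,
    Nat.mul_add_div (NeZero.pos n)]

theorem carry_self_neg [NeZero n] (a : ZMod n) : carry a (-a) = if a = 0 then 0 else 1 := by
  rw [carry, neg_val]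
  split_ifs with ha
  · simp [ha]
  · rw [Nat.add_sub_cancel' a.val_lt.le, Nat.div_self (NeZero.pos n)]

theorem carry_neg_one_neg [Fact (1 < n)] (a : ZMod n) :
    carry (-1) (-a) = if a = 0 then 0 else 1 := by
  have hv : a.val < n := a.val_lt
  rw [carry, neg_val, neg_val, if_neg one_ne_zero, val_one]
  split_ifs with ha
  · exact Nat.div_eq_of_lt (by omega)
  · have : a.val ≠ 0 := (val_ne_zero a).2 ha
    exact Nat.div_eq_of_lt_le (by omega) (by omega)

theorem pow_val_add_one {M : Type*} [Monoid M] [Fact (1 < n)] {x : M} (hx : x ^ n = 1)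
    (a : ZMod n) : x ^ (a + 1).val = x ^ a.val * x := by
  rw [val_add, val_one, ← pow_eq_pow_mod _ hx, pow_succ]

end ZMod

theorem apply_one_pow_mul_apply_zero {G M : Type*} [AddMonoidWithOne G] [CommMonoid M]
    {ρ σ : G → M} (hρ : ∀ x, ρ x * ρ 1 = σ x * ρ (x + 1)) (m : ℕ) :
    ρ 1 ^ m * ρ 0 = (∏ j ∈ range m, σ j) * ρ m := by
  induction m with
  | zero => simp
  | succ m ih =>
    rw [pow_succ, mul_right_comm, ih, prod_range_succ, mul_assoc, hρ, Nat.cast_succ, mul_assoc]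

section Cocycles

open ZMod

variable {n s : ℕ} {q : ℂ}

theorem phiCocycle_eq_pow_carry (x y z : ZMod n) :
    PhiCocycle n s q x y z = ((q ^ s) ^ x.val) ^ carry y z := by
  rw [PhiCocycle, carry, ← Nat.div_eq_sub_mod_div, pow_mul, pow_mul]

theorem sigmaCocycle_one_right [Fact (1 < n)] (hq : q ≠ 0) (x : ZMod n) :
    SigmaCocycle n s q x 1 =
      ((q ^ s) ^ (x + 1).val / (q ^ s) ^ (x + 1 + 1).val) ^ carry (-1) (-x) := by
  have hcarry : carry (1 : ZMod n) 1 + carry (1 + 1 : ZMod n) (-1) = carry (1 : ZMod n) (-1) := by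
    have hn : 1 < n := Fact.out
    rw [carry_add_carry, carry_self_neg, if_neg one_ne_zero, neg_val, if_neg one_ne_zero, val_one]
    exact Nat.div_eq_of_lt_le (by omega) (by omega)
  have hx : (q ^ s) ^ x.val ≠ 0 := pow_ne_zero _ (pow_ne_zero _ hq)
  simp only [SigmaCocycle, phiCocycle_eq_pow_carry]
  rw [div_pow, mul_right_comm, ← pow_add, hcarry,
    mul_comm _ (((q ^ s) ^ x.val) ^ _), mul_div_mul_left _ _ (pow_ne_zero _ hx)]

theorem sigmaCocycle_one_right_of_pow_eq_one [Fact (1 < n)] (hq : q ^ n = 1) (x : ZMod n) :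
    SigmaCocycle n s q x 1 = if x = 0 then 1 else (q ^ s)⁻¹ := by
  have hq0 : q ≠ 0 := by rintro rfl; simp [zero_pow (NeZero.ne n)] at hq
  have hqs : (q ^ s) ^ n = 1 := by rw [← pow_mul, mul_comm, pow_mul, hq, one_pow]
  rw [sigmaCocycle_one_right hq0, carry_neg_one_neg, pow_val_add_one hqs (x + 1)]
  split_ifs
  · exact pow_zero _
  · rw [pow_one, div_mul_cancel_left₀ (pow_ne_zero _ (pow_ne_zero _ hq0))]

theorem prod_range_sigmaCocycle_one_right [Fact (1 < n)] (hq : q ^ n = 1) :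
    ∏ j ∈ range n, SigmaCocycle n s q j 1 = q ^ s := by
  obtain ⟨m, rfl⟩ : ∃ m, n = m + 1 := Nat.exists_eq_add_one.2 (NeZero.pos n)
  have hq0 : q ≠ 0 := by rintro rfl; simp at hq
  have hne : ∀ j ∈ range m, ((j + 1 : ℕ) : ZMod (m + 1)) ≠ 0 := by
    intro j hj
    rw [Ne, natCast_eq_zero_iff]
    exact Nat.not_dvd_of_pos_of_lt j.succ_pos (by simpa using hj)
  rw [prod_range_succ', Nat.cast_zero, sigmaCocycle_one_right_of_pow_eq_one hq, if_pos rfl,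
    mul_one, prod_congr rfl fun j hj => by
      rw [sigmaCocycle_one_right_of_pow_eq_one hq, if_neg (hne j hj)],
    prod_const, card_range, inv_pow, inv_eq_iff_eq_inv,
    ← mul_eq_one_iff_eq_inv₀ (pow_ne_zero _ hq0), ← pow_succ, ← pow_mul, mul_comm, pow_mul, hq,
    one_pow]

end Cocycles

theorem one_dim_projective_rep_value_pow_general
    (n : ℕ) (hn : 2 ≤ n) (q : ℂ) (hq : IsPrimitiveRoot q n)
    (s : ℕ)
    (ρ : ZMod n → ℂ) (hρ : ∀ x, ρ x ≠ 0)
    (hmul : ∀ x y : ZMod n, ρ x * ρ y = SigmaCocycle n s q x y * ρ (x + y)) :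
    (ρ 1) ^ n = q ^ s := by
  have : Fact (1 < n) := ⟨hn⟩
  have hpow := apply_one_pow_mul_apply_zero (fun x => hmul x 1) n
  rw [ZMod.natCast_self, prod_range_sigmaCocycle_one_right hq.pow_eq_one] at hpow
  exact mul_right_cancel₀ (hρ 0) hpow

/-- If `ρ : ℤ_n → ℂ∖{0}` is a one-dimensional projective `σ_s`-representation, then
`λ = ρ(g)` satisfies `λ^n = 𝕢^s`. -/
theorem one_dim_projective_rep_value_pow
    (n : ℕ) (hn : 2 ≤ n) (q : ℂ) (hq : IsPrimitiveRoot q n)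
    (s : ℕ) (hs : s ≤ n - 1)
    (ρ : ZMod n → ℂ) (hρ : ∀ x, ρ x ≠ 0)
    (hmul : ∀ x y : ZMod n, ρ x * ρ y = SigmaCocycle n s q x y * ρ (x + y)) :
    (ρ 1) ^ n = q ^ s :=
  one_dim_projective_rep_value_pow_general n hn q hq s ρ hρ hmul
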